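/- For all integers m, n ≥ 2 with n ≥ ⌊m/2⌋ + 1, the Cartesian product of a path and a complete graph satisfies γ_oir2(P_m □ K_n) = m(n−1). -/

import Mathlib

/-!
Every fiber `{v} × K_n` of `G □ K_n` is a clique, so an outer-independent function leaves at most
one vertex of it empty and has weight at least `|V(G)| (n - 1)`. Conversely, let `c` be a proper
2-colouring of a graph `G` without isolated vertices, with the two colours identified with two
vertices of `K_n`. Leave `(v, c v)` empty and give every other vertex of the fiber over `v` the
colour `c v`: an empty vertex `(v, c v)` sees the colour `c v` in its own fiber and the other
colour `c u` at `(u, c v)` for a neighbour `u` of `v`. Paths on at least two vertices are such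
graphs.
-/

open SimpleGraph Finset

/-- `f` is an outer-independent 2-rainbow dominating function of `G`. -/
def IsOI2RD {V : Type*} (G : SimpleGraph V) (f : V → Finset (Fin 2)) : Prop :=
  (∀ v, f v = ∅ → ∀ c : Fin 2, ∃ u, G.Adj v u ∧ c ∈ f u) ∧
  (∀ u w, f u = ∅ → f w = ∅ → ¬ G.Adj u w)

/-- The outer-independent 2-rainbow domination number of `G`. -/
noncomputable def oir2 {V : Type*} [Fintype V] (G : SimpleGraph V) : ℕ :=
  sInf {w | ∃ f : V → Finset (Fin 2), IsOI2RD G f ∧ w = ∑ v, (f v).card}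

variable {V W : Type*} {G : SimpleGraph V}

namespace IsOI2RD

variable {f : V → Finset (Fin 2)}

lemma card_sub_one_le_sum_card_of_pairwise_adj {ι : Type*} [Fintype ι] (hf : IsOI2RD G f)
    {φ : ι → V} (hφ : Pairwise fun i j => G.Adj (φ i) (φ j)) :
    Fintype.card ι - 1 ≤ ∑ i, #(f (φ i)) := by
  classical
  have hempty : #{i | f (φ i) = ∅} ≤ 1 := by
    refine card_le_one.mpr fun i hi j hj => by_contra fun hij => ?_
    exact hf.2 _ _ (mem_filter.mp hi).2 (mem_filter.mp hj).2 (hφ hij)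
  have hone : ∀ i, 1 ≤ #(f (φ i)) + if f (φ i) = ∅ then 1 else 0 := fun i => by
    split_ifs with h
    · omega
    · exact card_pos.mpr (nonempty_iff_ne_empty.mpr h)
  have := calc Fintype.card ι
      = ∑ _i : ι, 1 := by simp
    _ ≤ ∑ i, (#(f (φ i)) + if f (φ i) = ∅ then 1 else 0) := sum_le_sum fun i _ => hone i
    _ = ∑ i, #(f (φ i)) + #{i | f (φ i) = ∅} := by rw [sum_add_distrib, card_filter]
  omega

lemma card_mul_card_sub_one_le_sum_card [Fintype V] [Fintype W] {f : V × W → Finset (Fin 2)}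
    (hf : IsOI2RD (G □ (⊤ : SimpleGraph W)) f) :
    Fintype.card V * (Fintype.card W - 1) ≤ ∑ p, #(f p) :=
  calc Fintype.card V * (Fintype.card W - 1)
      = ∑ _v : V, (Fintype.card W - 1) := by simp
    _ ≤ ∑ v, ∑ w, #(f (v, w)) := sum_le_sum fun v _ =>
        hf.card_sub_one_le_sum_card_of_pairwise_adj fun _ _ h => boxProd_adj_right.mpr h
    _ = ∑ p, #(f p) := (Fintype.sum_prod_type fun p => #(f p)).symm

end IsOI2RD

section ColoringLabel

variable [DecidableEq W] (c : G.Coloring (Fin 2)) (e : Fin 2 ↪ W)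

def coloringLabel (p : V × W) : Finset (Fin 2) :=
  if p.2 = e (c p.1) then ∅ else {c p.1}

variable {c e}

lemma coloringLabel_eq_empty_iff {p : V × W} : coloringLabel c e p = ∅ ↔ p.2 = e (c p.1) := by
  unfold coloringLabel
  split_ifs with h <;> simp [h]

lemma mem_coloringLabel_of_ne {v : V} {w : W} (hw : w ≠ e (c v)) :
    c v ∈ coloringLabel c e (v, w) := by
  simp [coloringLabel, hw]

lemma isOI2RD_coloringLabel (hG : ∀ v, ∃ u, G.Adj v u) :
    IsOI2RD (G □ (⊤ : SimpleGraph W)) (coloringLabel c e) := by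
  constructor
  · rintro ⟨v, w⟩ hvw k
    obtain rfl : w = e (c v) := coloringLabel_eq_empty_iff.mp hvw
    obtain ⟨u, huv⟩ := hG v
    have hcu : c u ≠ c v := (c.valid huv).symm
    by_cases hk : k = c v
    · subst hk
      have hne : e (1 - c v) ≠ e (c v) := e.injective.ne (by omega)
      exact ⟨(v, e (1 - c v)), boxProd_adj_right.mpr ((top_adj _ _).mpr hne.symm),
        mem_coloringLabel_of_ne hne⟩
    · obtain rfl : k = c u := by omega
      exact ⟨(u, e (c v)), boxProd_adj_left.mpr huv,
        mem_coloringLabel_of_ne (e.injective.ne hcu.symm)⟩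
  · rintro ⟨v, w⟩ ⟨v', w'⟩ hvw hvw' hadj
    rw [coloringLabel_eq_empty_iff] at hvw hvw'
    dsimp only at hvw hvw'
    subst hvw hvw'
    rcases boxProd_adj.mp hadj with ⟨hvv', hw⟩ | ⟨hw, rfl⟩
    · exact c.valid hvv' (e.injective hw)
    · exact hw.ne rfl

lemma sum_card_coloringLabel [Fintype V] [Fintype W] :
    ∑ p, #(coloringLabel c e p) = Fintype.card V * (Fintype.card W - 1) := by
  have hfiber : ∀ v : V, ∑ w, #(coloringLabel c e (v, w)) = Fintype.card W - 1 := fun v => by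
    simp only [coloringLabel, apply_ite card, card_empty, card_singleton]
    rw [sum_ite, sum_const_zero, zero_add, sum_const, smul_eq_mul, mul_one, filter_ne',
      card_erase_of_mem (mem_univ _), card_univ]
  rw [Fintype.sum_prod_type, sum_congr rfl fun v _ => hfiber v, sum_const, smul_eq_mul, card_univ]

end ColoringLabel

theorem oir2_boxProd_top_of_isBipartite [Fintype V] [Fintype W] (hG : G.IsBipartite)
    (hG' : ∀ v, ∃ u, G.Adj v u) (hW : 2 ≤ Fintype.card W) :
    oir2 (G □ (⊤ : SimpleGraph W)) = Fintype.card V * (Fintype.card W - 1) := by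
  classical
  obtain ⟨c⟩ := hG
  obtain ⟨e⟩ := Function.Embedding.nonempty_of_card_le (α := Fin 2) (by simpa using hW)
  refine IsLeast.csInf_eq ⟨⟨coloringLabel c e, isOI2RD_coloringLabel hG',
    sum_card_coloringLabel.symm⟩, ?_⟩
  rintro _ ⟨f, hf, rfl⟩
  exact hf.card_mul_card_sub_one_le_sum_card

theorem oir2_pathGraph_boxProd_complete_general (m n : ℕ) (hm : 2 ≤ m) (hn : 2 ≤ n) :
    oir2 (SimpleGraph.pathGraph m □ (⊤ : SimpleGraph (Fin n))) = m * (n - 1) := by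
  have : Nontrivial (Fin m) := Fin.nontrivial_iff_two_le.mpr hm
  simpa using oir2_boxProd_top_of_isBipartite (pathGraph.bicoloring m).colorable
    (pathGraph_preconnected m).exists_adj_of_nontrivial (W := Fin n) (by simpa using hn)

/-- For `m, n ≥ 2` with `n ≥ ⌊m/2⌋ + 1`, `γ_oir2(P_m □ K_n) = m(n-1)`. -/
theorem oir2_pathGraph_boxProd_complete (m n : ℕ) (hm : 2 ≤ m) (hn : 2 ≤ n)
    (hmn : m / 2 + 1 ≤ n) :
    oir2 (SimpleGraph.pathGraph m □ (⊤ : SimpleGraph (Fin n))) = m * (n - 1) :=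
  oir2_pathGraph_boxProd_complete_general m n hm hn
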